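/- Let κ ≥ 0 and let Γ₂ be the rank-one Dunkl iterated carré du champ as above. Then for every f ∈ C⁴(ℝ) and every x ≠ 0, Γ₂(f)(x) ≥ f''(x)². -/

import Mathlib

/-- The rank-one Dunkl Laplacian. -/
noncomputable def dunklLap1 (κ : ℝ) (f : ℝ → ℝ) (x : ℝ) : ℝ :=
  deriv (deriv f) x + κ / x ^ 2 * (f (-x) - f x + 2 * x * deriv f x)

/-- The rank-one carré du champ operator (roots normalized so that |α| = √2). -/
noncomputable def dunklGamma1 (κ : ℝ) (f g : ℝ → ℝ) (x : ℝ) : ℝ :=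
  deriv f x * deriv g x + κ / (2 * x ^ 2) * (f x - f (-x)) * (g x - g (-x))

/-- The rank-one iterated carré du champ operator
`Γ₂(f) = ½ Δ_κ Γ(f) − Γ(Δ_κ f, f)`. -/
noncomputable def dunklGamma2 (κ : ℝ) (f : ℝ → ℝ) (x : ℝ) : ℝ :=
  (1 / 2) * dunklLap1 κ (fun y => dunklGamma1 κ f f y) x
    - dunklGamma1 κ (fun y => dunklLap1 κ f y) f x

/-!
Everything is an explicit computation at the point `x ≠ 0`, where the coefficients `κ / x ^ n`
are smooth. Expanding `Γ₂(f)(x)`, the third derivative `f'''(x)` cancels between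
`½ Δ_κ Γ(f)` and `Γ(Δ_κ f, f)`, and so does `f''(-x)`; what remains beyond `f''(x) ^ 2` is
`κ / x ^ 4` times a positive semidefinite quadratic form in `f(x) - f(-x)`, `x f'(x)` and
`x f'(-x)`, which completing the square writes as a sum of squares.
-/

section Calculus

variable {𝕜 : Type*} [NontriviallyNormedField 𝕜]

theorem HasDerivAt.comp_neg {g : 𝕜 → 𝕜} {g' y : 𝕜} (h : HasDerivAt g g' (-y)) :
    HasDerivAt (fun z => g (-z)) (-g') y :=
  (h.comp y (hasDerivAt_neg' y)).congr_deriv (mul_neg_one g')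

theorem hasDerivAt_const_div_pow (c : 𝕜) (n : ℕ) {y : 𝕜} (hy : y ≠ 0) :
    HasDerivAt (fun z => c / z ^ n) (-(n * c) / y ^ (n + 1)) y := by
  refine ((hasDerivAt_const y c).fun_div (hasDerivAt_pow n y)
    (pow_ne_zero n hy)).congr_deriv ?_
  rcases n with _ | n
  · simp
  · rw [Nat.add_sub_cancel]
    field_simp
    push_cast
    ring

end Calculus

theorem dunklGamma1_self (κ : ℝ) (f : ℝ → ℝ) (y : ℝ) :
    dunklGamma1 κ f f y = deriv f y ^ 2 + κ / 2 / y ^ 2 * (f y - f (-y)) ^ 2 := by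
  rw [dunklGamma1, div_div]
  ring

noncomputable def dunklGamma1Deriv (κ : ℝ) (f : ℝ → ℝ) (y : ℝ) : ℝ :=
  2 * deriv f y * deriv (deriv f) y - κ / y ^ 3 * (f y - f (-y)) ^ 2
    + κ / y ^ 2 * (f y - f (-y)) * (deriv f y + deriv f (-y))

section Derivatives

variable {κ : ℝ} {f : ℝ → ℝ} (hf₀ : Differentiable ℝ f) (hf₁ : Differentiable ℝ (deriv f))
include hf₀ hf₁

theorem hasDerivAt_dunklGamma1_self {y : ℝ} (hy : y ≠ 0) :
    HasDerivAt (fun z => dunklGamma1 κ f f z) (dunklGamma1Deriv κ f y) y := by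
  have hodd := (hf₀ y).hasDerivAt.fun_sub (hf₀ (-y)).hasDerivAt.comp_neg
  rw [funext (dunklGamma1_self κ f)]
  refine (((hf₁ y).hasDerivAt.fun_pow 2).fun_add
    ((hasDerivAt_const_div_pow (κ / 2) 2 hy).fun_mul (hodd.fun_pow 2))).congr_deriv ?_
  simp only [dunklGamma1Deriv]
  field_simp
  ring

theorem hasDerivAt_dunklLap1 (hf₂ : Differentiable ℝ (deriv (deriv f))) {y : ℝ}
    (hy : y ≠ 0) :
    HasDerivAt (fun z => dunklLap1 κ f z)
      (deriv (deriv (deriv f)) y - 2 * κ / y ^ 3 * (f (-y) - f y + 2 * y * deriv f y)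
        + κ / y ^ 2 * (deriv f y - deriv f (-y) + 2 * y * deriv (deriv f) y)) y := by
  refine ((hf₂ y).hasDerivAt.fun_add ((hasDerivAt_const_div_pow κ 2 hy).fun_mul
    (((hf₀ (-y)).hasDerivAt.comp_neg.fun_sub (hf₀ y).hasDerivAt).fun_add
      (((hasDerivAt_id' y).const_mul 2).fun_mul (hf₁ y).hasDerivAt)))).congr_deriv ?_
  field_simp
  ring

theorem hasDerivAt_dunklGamma1Deriv (hf₂ : Differentiable ℝ (deriv (deriv f))) {y : ℝ}
    (hy : y ≠ 0) :
    HasDerivAt (dunklGamma1Deriv κ f)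
      (2 * deriv (deriv f) y ^ 2 + 2 * deriv f y * deriv (deriv (deriv f)) y
        + 3 * κ / y ^ 4 * (f y - f (-y)) ^ 2
        - 4 * κ / y ^ 3 * (f y - f (-y)) * (deriv f y + deriv f (-y))
        + κ / y ^ 2 * (deriv f y + deriv f (-y)) ^ 2
        + κ / y ^ 2 * (f y - f (-y)) * (deriv (deriv f) y - deriv (deriv f) (-y))) y := by
  have hodd := (hf₀ y).hasDerivAt.fun_sub (hf₀ (-y)).hasDerivAt.comp_neg
  have heven := (hf₁ y).hasDerivAt.fun_add (hf₁ (-y)).hasDerivAt.comp_neg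
  refine (((((hf₁ y).hasDerivAt.const_mul 2).fun_mul (hf₂ y).hasDerivAt).fun_sub
    ((hasDerivAt_const_div_pow κ 3 hy).fun_mul (hodd.fun_pow 2))).fun_add
    (((hasDerivAt_const_div_pow κ 2 hy).fun_mul hodd).fun_mul heven)).congr_deriv ?_
  field_simp
  ring

theorem deriv_deriv_dunklGamma1_self {x : ℝ} (hx : x ≠ 0) :
    deriv (deriv fun z => dunklGamma1 κ f f z) x = deriv (dunklGamma1Deriv κ f) x := by
  refine Filter.EventuallyEq.deriv_eq ?_
  filter_upwards [isOpen_ne.mem_nhds hx] with y hy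
  exact (hasDerivAt_dunklGamma1_self hf₀ hf₁ hy).deriv

theorem dunklGamma2_eq_sq_add (hf₂ : Differentiable ℝ (deriv (deriv f))) {x : ℝ}
    (hx : x ≠ 0) :
    dunklGamma2 κ f x = deriv (deriv f) x ^ 2
      + κ / x ^ 4 * (3 / 2 * (f x - f (-x) - 2 / 3 * x * (deriv f (-x) + 2 * deriv f x)) ^ 2
        + x ^ 2 / 3 * (deriv f x - deriv f (-x)) ^ 2) := by
  rw [dunklGamma2, dunklLap1, deriv_deriv_dunklGamma1_self hf₀ hf₁ hx,
    (hasDerivAt_dunklGamma1Deriv hf₀ hf₁ hf₂ hx).deriv,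
    (hasDerivAt_dunklGamma1_self hf₀ hf₁ hx).deriv,
    dunklGamma1.eq_1 _ (fun y => dunklLap1 κ f y),
    (hasDerivAt_dunklLap1 hf₀ hf₁ hf₂ hx).deriv]
  simp only [dunklGamma1Deriv, dunklGamma1, dunklLap1, neg_neg]
  field_simp
  ring

end Derivatives

theorem dunklGamma2_CD (κ : ℝ) (hκ : 0 ≤ κ) (f : ℝ → ℝ)
    (hf : ContDiff ℝ 4 f) (x : ℝ) (hx : x ≠ 0) :
    (deriv (deriv f) x) ^ 2 ≤ dunklGamma2 κ f x := by
  have hdiff (n : ℕ) (hn : n < 4) : Differentiable ℝ (deriv^[n] f) := by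
    simpa only [iteratedDeriv_eq_iterate] using
      hf.differentiable_iteratedDeriv n (by exact_mod_cast hn)
  rw [dunklGamma2_eq_sq_add (f := f) (hdiff 0 (by norm_num)) (hdiff 1 (by norm_num))
    (hdiff 2 (by norm_num)) hx]
  exact le_add_of_nonneg_right (by positivity)
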